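/- Let G be a word-hyperbolic group with finite generating set A and word metric d, and let H, F ≤ G be quasiconvex subgroups such that F is conjugacy separated from H in G. Then there is an integer constant K₁ = K₁(H, F, G, A) > 0 with the following property: if g ∈ G is a shortest element (with respect to the word length |·|_A) in the double coset HgF, f ∈ F is arbitrary, and h ∈ H is such that hgf is a shortest element in the coset Hgf, then |h|_A ≤ K₁. -/

import Mathlib

variable {G : Type*} [Group G]

/-- The set of lengths of words in the alphabet `A ∪ A⁻¹` representing `g`. -/
def wordLengthSet (A : Finset G) (g : G) : Set ℕ :=
  {n | ∃ l : List G, l.length = n ∧ (∀ x ∈ l, x ∈ A ∨ x⁻¹ ∈ A) ∧ l.prod = g}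

/-- The word length of `g` with respect to the generating set `A`. -/
noncomputable def wl (A : Finset G) (g : G) : ℕ :=
  sInf (wordLengthSet A g)

/-- The word metric on `G` (distance between vertices of the Cayley graph `Γ(G,A)`). -/
noncomputable def wdist (A : Finset G) (g h : G) : ℕ :=
  wl A (g⁻¹ * h)

/-- A (discrete) geodesic from `x` to `y` in the Cayley graph `Γ(G,A)`. -/
def IsGeodesic (A : Finset G) (γ : ℕ → G) (x y : G) : Prop :=
  γ 0 = x ∧ γ (wdist A x y) = y ∧
    ∀ i j : ℕ, i ≤ wdist A x y → j ≤ wdist A x y →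
      wdist A (γ i) (γ j) = Nat.dist i j

/-- The Gromov product `(x,y)_z` in the Cayley graph `Γ(G,A)`. -/
noncomputable def gp (A : Finset G) (z x y : G) : ℝ :=
  ((wdist A z x : ℝ) + (wdist A z y : ℝ) - (wdist A x y : ℝ)) / 2

/-- All geodesic triangles in `Γ(G,A)` are `δ`-thin: each side is contained in the
closed `δ`-neighbourhood of the union of the other two sides. -/
def IsThin (A : Finset G) (δ : ℝ) : Prop :=
  ∀ x y z : G, ∀ γ₁ γ₂ γ₃ : ℕ → G,
    IsGeodesic A γ₁ x y → IsGeodesic A γ₂ y z → IsGeodesic A γ₃ x z →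
    ∀ i, i ≤ wdist A x y →
      (∃ j, j ≤ wdist A y z ∧ (wdist A (γ₁ i) (γ₂ j) : ℝ) ≤ δ) ∨
      (∃ j, j ≤ wdist A x z ∧ (wdist A (γ₁ i) (γ₃ j) : ℝ) ≤ δ)

/-- All geodesic triangles in `Γ(G,A)` are `δ`-trim: points on two sides of a triangle
which are equidistant from the common vertex, up to the Gromov product of the two other
vertices at that vertex, are `δ`-close. -/
def TrimCayley (A : Finset G) (δ : ℝ) : Prop :=
  ∀ x y z : G, ∀ γ₁ γ₂ : ℕ → G, IsGeodesic A γ₁ z x → IsGeodesic A γ₂ z y →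
    ∀ i : ℕ, (i : ℝ) ≤ gp A z x y → (wdist A (γ₁ i) (γ₂ i) : ℝ) ≤ δ

/-- `G` is word-hyperbolic: it is finitely generated and for every finite generating
set `A` there is `δ ≥ 0` such that all geodesic triangles in `Γ(G,A)` are `δ`-thin. -/
def WordHyperbolic (G : Type*) [Group G] : Prop :=
  (∃ A : Finset G, Subgroup.closure (A : Set G) = ⊤) ∧
    ∀ A : Finset G, Subgroup.closure (A : Set G) = ⊤ →
      ∃ δ : ℝ, 0 ≤ δ ∧ IsThin A δ

/-- `G` is virtually cyclic (elementary). -/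
def VirtuallyCyclic (G : Type*) [Group G] : Prop :=
  ∃ H : Subgroup G, IsCyclic H ∧ H.FiniteIndex

/-- `H` is a quasiconvex subgroup of `G`: for every finite generating set `A` there is
`ε ≥ 0` such that every geodesic of `Γ(G,A)` with both endpoints in `H` stays in the
`ε`-neighbourhood of `H`. -/
def QCSubgroup (H : Subgroup G) : Prop :=
  ∀ A : Finset G, Subgroup.closure (A : Set G) = ⊤ →
    ∃ ε : ℝ, 0 ≤ ε ∧ ∀ h₁ h₂ : G, h₁ ∈ H → h₂ ∈ H →
      ∀ γ : ℕ → G, IsGeodesic A γ h₁ h₂ →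
        ∀ i, i ≤ wdist A h₁ h₂ → ∃ h ∈ H, (wdist A (γ i) h : ℝ) ≤ ε

/-- `F` is conjugacy separated from `H` in `G`: `g⁻¹Hg ∩ F = 1` for every `g ∈ G`. -/
def ConjSeparated (H F : Subgroup G) : Prop :=
  ∀ g x : G, x ∈ F → g * x * g⁻¹ ∈ H → x = 1

/-! Suppose `|h|` is large and walk along a geodesic from `h` to `1`. A point `p` at distance
`i` from `h` lies near some `a ∈ H` and, by thinness of the quadrilateral `h, 1, hgf, hg`, near
one of its other three sides. Near `[1, hgf]` it would make `a⁻¹hgf` shorter than `hgf`, near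
`[h, hg]` it would make `a⁻¹hg` shorter than `g`; so it is near `[hg, hgf] = hg·[f, 1]`, hence
near some `hgb` with `b ∈ F`, and `c = a⁻¹hgb` lies in a fixed ball. Doing this for more values
of `i` than the ball has elements, two of them give the same `c`; conjugacy separation then forces
the same `a`, which is impossible since `|a| ≈ |h| - i`. -/

section WordLength

variable {A : Finset G}

lemma wl_prod_le_length {l : List G} (hl : ∀ x ∈ l, x ∈ A ∨ x⁻¹ ∈ A) :
    wl A l.prod ≤ l.length :=
  Nat.sInf_le ⟨l, rfl, hl, rfl⟩

lemma exists_list_length_eq_wl (hA : Subgroup.closure (A : Set G) = ⊤) (g : G) :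
    ∃ l : List G, l.length = wl A g ∧ (∀ x ∈ l, x ∈ A ∨ x⁻¹ ∈ A) ∧ l.prod = g := by
  have hg : g ∈ (Subgroup.closure (A : Set G)).toSubmonoid := by rw [hA]; trivial
  rw [Subgroup.closure_toSubmonoid] at hg
  obtain ⟨l, hl, hprod⟩ := Submonoid.exists_list_of_mem_closure hg
  exact Nat.sInf_mem (s := wordLengthSet A g)
    ⟨l.length, l, rfl, fun x hx => (hl x hx).imp id Set.mem_inv.mp, hprod⟩

lemma wl_one : wl A (1 : G) = 0 :=
  Nat.le_zero.mp (wl_prod_le_length (l := []) (by simp))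

lemma wl_mul_le (hA : Subgroup.closure (A : Set G) = ⊤) (a b : G) :
    wl A (a * b) ≤ wl A a + wl A b := by
  obtain ⟨l₁, hlen₁, hl₁, rfl⟩ := exists_list_length_eq_wl hA a
  obtain ⟨l₂, hlen₂, hl₂, rfl⟩ := exists_list_length_eq_wl hA b
  rw [← hlen₁, ← hlen₂, ← List.length_append, ← List.prod_append]
  exact wl_prod_le_length fun x hx => (List.mem_append.mp hx).elim (hl₁ x) (hl₂ x)

lemma wl_inv_le (hA : Subgroup.closure (A : Set G) = ⊤) (a : G) : wl A a⁻¹ ≤ wl A a := by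
  obtain ⟨l, hlen, hl, rfl⟩ := exists_list_length_eq_wl hA a
  have := wl_prod_le_length (A := A) (l := (l.map (·⁻¹)).reverse) fun x hx => by
    obtain ⟨y, hy, rfl⟩ := List.mem_map.mp (List.mem_reverse.mp hx)
    simpa only [inv_inv, or_comm] using hl y hy
  rwa [← List.prod_inv_reverse, List.length_reverse, List.length_map, hlen] at this

lemma wl_inv (hA : Subgroup.closure (A : Set G) = ⊤) (a : G) : wl A a⁻¹ = wl A a :=
  (wl_inv_le hA a).antisymm (by simpa using wl_inv_le hA a⁻¹)

lemma finite_setOf_wl_le (hA : Subgroup.closure (A : Set G) = ⊤) (n : ℕ) :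
    {g : G | wl A g ≤ n}.Finite := by
  set S : Set G := {x | x ∈ A ∨ x⁻¹ ∈ A}
  have : Finite S := (A.finite_toSet.union A.finite_toSet.inv).subset fun x hx => hx
  refine ((List.finite_length_le S n).image fun l => (l.map Subtype.val).prod).subset ?_
  intro g hg
  obtain ⟨l, hlen, hl, rfl⟩ := exists_list_length_eq_wl hA g
  lift l to List S using hl
  exact ⟨l, (List.length_map _).symm.trans_le (hlen.trans_le hg), rfl⟩

end WordLength

section Geodesics

variable {A : Finset G}

lemma wdist_comm (hA : Subgroup.closure (A : Set G) = ⊤) (x y : G) :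
    wdist A x y = wdist A y x := by
  rw [wdist, wdist, ← wl_inv hA, mul_inv_rev, inv_inv]

lemma wdist_triangle (hA : Subgroup.closure (A : Set G) = ⊤) (x y z : G) :
    wdist A x z ≤ wdist A x y + wdist A y z := by
  simpa [wdist, mul_assoc] using wl_mul_le hA (x⁻¹ * y) (y⁻¹ * z)

@[simp]
lemma wdist_mul_left (a x y : G) : wdist A (a * x) (a * y) = wdist A x y := by
  simp [wdist, mul_assoc]

lemma wdist_one_left (x : G) : wdist A 1 x = wl A x := by
  simp [wdist]

lemma wdist_one_right (hA : Subgroup.closure (A : Set G) = ⊤) (x : G) :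
    wdist A x 1 = wl A x := by
  rw [wdist_comm hA, wdist_one_left]

lemma IsGeodesic.wdist_left {γ : ℕ → G} {x y : G} (hγ : IsGeodesic A γ x y) {i : ℕ}
    (hi : i ≤ wdist A x y) : wdist A x (γ i) = i := by
  simpa [hγ.1, Nat.dist_zero_left] using hγ.2.2 0 i (Nat.zero_le _) hi

lemma IsGeodesic.wdist_right {γ : ℕ → G} {x y : G} (hγ : IsGeodesic A γ x y) {i : ℕ}
    (hi : i ≤ wdist A x y) : wdist A (γ i) y = wdist A x y - i := by
  simpa [hγ.2.1, Nat.dist_eq_sub_of_le hi] using hγ.2.2 i _ hi le_rfl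

lemma IsGeodesic.mul_left {γ : ℕ → G} {x y : G} (hγ : IsGeodesic A γ x y) (a : G) :
    IsGeodesic A (fun n => a * γ n) (a * x) (a * y) := by
  obtain ⟨h0, hend, hdist⟩ := hγ
  refine ⟨by simp [h0], by simp [hend], fun i j hi hj => ?_⟩
  simp only [wdist_mul_left] at hi hj ⊢
  exact hdist i j hi hj

lemma wdist_le_sub_of_wdist_succ_le_one {γ : ℕ → G}
    (hA : Subgroup.closure (A : Set G) = ⊤) (hstep : ∀ k, wdist A (γ k) (γ (k + 1)) ≤ 1)
    {i j : ℕ} (hij : i ≤ j) : wdist A (γ i) (γ j) ≤ j - i := by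
  induction j, hij using Nat.le_induction with
  | base => simp [wdist, wl_one]
  | succ j hij ih =>
    have := wdist_triangle hA (γ i) (γ j) (γ (j + 1))
    have := hstep j
    omega

lemma isGeodesic_of_wdist_succ_le_one {γ : ℕ → G} {x y : G}
    (hA : Subgroup.closure (A : Set G) = ⊤) (h0 : γ 0 = x) (hend : γ (wdist A x y) = y)
    (hstep : ∀ k, wdist A (γ k) (γ (k + 1)) ≤ 1) : IsGeodesic A γ x y := by
  have hle : ∀ {i j}, i ≤ j → wdist A (γ i) (γ j) ≤ j - i :=
    wdist_le_sub_of_wdist_succ_le_one hA hstep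
  have hdist : ∀ i j, i ≤ j → j ≤ wdist A x y → wdist A (γ i) (γ j) = j - i := by
    intro i j hij hj
    have hxi := hle (Nat.zero_le i)
    have hjy := hle hj
    have hxy := wdist_triangle hA (γ 0) (γ i) (γ (wdist A x y))
    have hiy := wdist_triangle hA (γ i) (γ j) (γ (wdist A x y))
    rw [h0] at hxi hxy
    rw [hend] at hjy hxy hiy
    have := hle hij
    omega
  refine ⟨h0, hend, fun i j hi hj => ?_⟩
  rcases le_total i j with hij | hji
  · rw [hdist i j hij hj, Nat.dist_eq_sub_of_le hij]
  · rw [wdist_comm hA, hdist j i hji hi, Nat.dist_eq_sub_of_le_right hji]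

lemma exists_isGeodesic (hA : Subgroup.closure (A : Set G) = ⊤) (x y : G) :
    ∃ γ : ℕ → G, IsGeodesic A γ x y := by
  obtain ⟨l, hlen, hl, hprod⟩ := exists_list_length_eq_wl hA (x⁻¹ * y)
  refine ⟨fun k => x * (l.take k).prod, isGeodesic_of_wdist_succ_le_one hA (by simp) ?_ ?_⟩
  · rw [wdist, ← hlen, List.take_length, hprod, mul_inv_cancel_left]
  · intro k
    rw [wdist_mul_left, wdist, List.take_add_one, List.prod_append, inv_mul_cancel_left]
    refine (wl_prod_le_length fun z hz => hl z ?_).trans ?_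
    · exact List.mem_of_getElem? (Option.mem_toList.mp hz)
    · cases l[k]? <;> simp

lemma IsGeodesic.le_wdist_of_wdist_le {γ : ℕ → G} {z y a : G}
    (hA : Subgroup.closure (A : Set G) = ⊤) (hγ : IsGeodesic A γ z y)
    (hzy : wdist A z y ≤ wdist A a y) {j : ℕ} (hj : j ≤ wdist A z y) :
    j ≤ wdist A a (γ j) := by
  have := wdist_triangle hA a (γ j) y
  have := hγ.wdist_right hj
  omega

end Geodesics

section Hyperbolic

variable {A : Finset G}

lemma IsThin.mono {δ δ' : ℝ} (hthin : IsThin A δ) (hδ : δ ≤ δ') : IsThin A δ' :=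
  fun x y z γ₁ γ₂ γ₃ h₁ h₂ h₃ i hi =>
    (hthin x y z γ₁ γ₂ γ₃ h₁ h₂ h₃ i hi).imp
      (fun ⟨j, hj, hd⟩ => ⟨j, hj, hd.trans hδ⟩) (fun ⟨j, hj, hd⟩ => ⟨j, hj, hd.trans hδ⟩)

lemma WordHyperbolic.exists_isThin (hG : WordHyperbolic G)
    (hA : Subgroup.closure (A : Set G) = ⊤) : ∃ D : ℕ, IsThin A D := by
  obtain ⟨δ, -, hδ⟩ := hG.2 A hA
  exact ⟨⌈δ⌉₊, hδ.mono (Nat.le_ceil δ)⟩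

/-- A diagonal from `x` to `z` cuts the quadrilateral into two `D`-thin triangles. -/
lemma IsThin.quadrilateral (hA : Subgroup.closure (A : Set G) = ⊤) {D : ℕ}
    (hthin : IsThin A D) {x y z w : G} {γ₁ γ₂ γ₃ γ₄ : ℕ → G}
    (h₁ : IsGeodesic A γ₁ x y) (h₂ : IsGeodesic A γ₂ y z) (h₃ : IsGeodesic A γ₃ z w)
    (h₄ : IsGeodesic A γ₄ x w) {i : ℕ} (hi : i ≤ wdist A x y) :
    (∃ j ≤ wdist A y z, wdist A (γ₁ i) (γ₂ j) ≤ 2 * D) ∨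
      (∃ j ≤ wdist A z w, wdist A (γ₁ i) (γ₃ j) ≤ 2 * D) ∨
      (∃ j ≤ wdist A x w, wdist A (γ₁ i) (γ₄ j) ≤ 2 * D) := by
  obtain ⟨σ, hσ⟩ := exists_isGeodesic hA x z
  rcases hthin x y z γ₁ γ₂ σ h₁ h₂ hσ i hi with ⟨j, hj, hd⟩ | ⟨j, hj, hd⟩
  · have : wdist A (γ₁ i) (γ₂ j) ≤ D := by exact_mod_cast hd
    exact Or.inl ⟨j, hj, by omega⟩
  have hd : wdist A (γ₁ i) (σ j) ≤ D := by exact_mod_cast hd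
  rcases hthin x z w σ γ₃ γ₄ hσ h₃ h₄ j hj with ⟨k, hk, hd'⟩ | ⟨k, hk, hd'⟩
  · have hd' : wdist A (σ j) (γ₃ k) ≤ D := by exact_mod_cast hd'
    have := wdist_triangle hA (γ₁ i) (σ j) (γ₃ k)
    exact Or.inr (Or.inl ⟨k, hk, by omega⟩)
  · have hd' : wdist A (σ j) (γ₄ k) ≤ D := by exact_mod_cast hd'
    have := wdist_triangle hA (γ₁ i) (σ j) (γ₄ k)
    exact Or.inr (Or.inr ⟨k, hk, by omega⟩)

def IsQuasiconvexWith (A : Finset G) (H : Subgroup G) (E : ℕ) : Prop :=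
  ∀ h₁ ∈ H, ∀ h₂ ∈ H, ∀ γ : ℕ → G, IsGeodesic A γ h₁ h₂ →
    ∀ i ≤ wdist A h₁ h₂, ∃ h ∈ H, wdist A (γ i) h ≤ E

lemma QCSubgroup.exists_isQuasiconvexWith {H : Subgroup G} (hH : QCSubgroup H)
    (hA : Subgroup.closure (A : Set G) = ⊤) : ∃ E : ℕ, IsQuasiconvexWith A H E := by
  obtain ⟨ε, -, hε⟩ := hH A hA
  refine ⟨⌈ε⌉₊, fun h₁ hh₁ h₂ hh₂ γ hγ i hi => ?_⟩
  obtain ⟨h, hh, hd⟩ := hε h₁ h₂ hh₁ hh₂ γ hγ i hi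
  exact ⟨h, hh, by exact_mod_cast hd.trans (Nat.le_ceil ε)⟩

end Hyperbolic

lemma ConjSeparated.eq_of_mul_mul_eq {H F : Subgroup G} (hsep : ConjSeparated H F)
    {a a' b b' c : G} (ha : a ∈ H) (ha' : a' ∈ H) (hb : b ∈ F) (hb' : b' ∈ F)
    (h : a * c * b = a' * c * b') : a = a' := by
  have hconj : c * (b * b'⁻¹) * c⁻¹ = a⁻¹ * a' := by
    calc c * (b * b'⁻¹) * c⁻¹ = a⁻¹ * (a * c * b) * b'⁻¹ * c⁻¹ := by group
      _ = a⁻¹ * a' := by rw [h]; group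
  have hbb' : b = b' := mul_inv_eq_one.mp <|
    hsep c _ (mul_mem hb (inv_mem hb')) (hconj ▸ mul_mem (inv_mem ha) ha')
  rw [hbb'] at h
  exact mul_right_cancel (mul_right_cancel h)

section DoubleCoset

variable {A : Finset G} {H F : Subgroup G} {D EH EF : ℕ} {g f h : G}

lemma exists_short_middle_factor (hA : Subgroup.closure (A : Set G) = ⊤)
    (hthin : IsThin A D) (qcH : IsQuasiconvexWith A H EH) (qcF : IsQuasiconvexWith A F EF)
    (hg : ∀ h ∈ H, ∀ f ∈ F, wl A g ≤ wl A (h * g * f)) (hf : f ∈ F) (hh : h ∈ H)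
    (hmin : ∀ h' ∈ H, wl A (h * (g * f)) ≤ wl A (h' * (g * f)))
    {i : ℕ} (hi₁ : EH + 4 * D < i) (hi₂ : i + EH + 4 * D < wl A h) :
    ∃ a ∈ H, ∃ b ∈ F, ∃ c, wl A c ≤ EH + 2 * D + EF ∧ a * c * b = h * g ∧
      wl A a + i ≤ wl A h + EH ∧ wl A h ≤ wl A a + i + EH := by
  have hi : i ≤ wdist A h 1 := by rw [wdist_one_right hA]; omega
  obtain ⟨γ₁, hγ₁⟩ := exists_isGeodesic hA h 1
  obtain ⟨γ₂, hγ₂⟩ := exists_isGeodesic hA 1 (h * g * f)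
  obtain ⟨ρ, hρ⟩ := exists_isGeodesic hA f 1
  obtain ⟨γ₄, hγ₄⟩ := exists_isGeodesic hA h (h * g)
  have hγ₃ : IsGeodesic A (fun n => h * g * ρ n) (h * g * f) (h * g) := by
    simpa using hρ.mul_left (h * g)
  obtain ⟨a, ha, hpa⟩ := qcH h hh 1 H.one_mem γ₁ hγ₁ i hi
  have hap := wdist_comm hA a (γ₁ i)
  have hhp := hγ₁.wdist_left hi
  have hp1 := hγ₁.wdist_right hi
  rw [wdist_one_right hA h] at hp1
  have ha₁ : wl A a + i ≤ wl A h + EH := by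
    have := wdist_triangle hA a (γ₁ i) 1
    rw [wdist_one_right hA a] at this
    omega
  have ha₂ : wl A h ≤ wl A a + i + EH := by
    have := wdist_triangle hA (γ₁ i) a 1
    rw [wdist_one_right hA a] at this
    omega
  rcases hthin.quadrilateral hA hγ₁ hγ₂ hγ₃ hγ₄ hi with
    ⟨j, hj, hpq⟩ | ⟨j, hj, hpq⟩ | ⟨j, hj, hpq⟩
  · exfalso
    have hja : j ≤ wdist A a (γ₂ j) := hγ₂.le_wdist_of_wdist_le hA (by
      simpa [wdist, mul_assoc] using hmin (a⁻¹ * h) (mul_mem (inv_mem ha) hh)) hj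
    have h1q : wdist A (γ₂ j) 1 = j := by rw [wdist_comm hA]; exact hγ₂.wdist_left hj
    have := wdist_triangle hA a (γ₁ i) (γ₂ j)
    have := wdist_triangle hA (γ₁ i) (γ₂ j) 1
    omega
  · have hj' : j ≤ wdist A f 1 := by
      rwa [← wdist_mul_left (h * g), mul_one]
    obtain ⟨b, hb, hqb⟩ := qcF f hf 1 F.one_mem ρ hρ j hj'
    refine ⟨a, ha, b⁻¹, inv_mem hb, a⁻¹ * (h * g * b), ?_, by group, ha₁, ha₂⟩
    have := wdist_triangle hA a (γ₁ i) (h * g * b)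
    have := wdist_triangle hA (γ₁ i) (h * g * ρ j) (h * g * b)
    rw [wdist_mul_left] at this
    change wdist A a (h * g * b) ≤ _
    omega
  · exfalso
    have hja : j ≤ wdist A a (γ₄ j) := hγ₄.le_wdist_of_wdist_le hA (by
      simpa [wdist, mul_assoc] using hg (a⁻¹ * h) (mul_mem (inv_mem ha) hh) 1 F.one_mem) hj
    have hhq := hγ₄.wdist_left hj
    have := wdist_triangle hA a (γ₁ i) (γ₄ j)
    have := wdist_triangle hA h (γ₄ j) (γ₁ i)
    rw [wdist_comm hA (γ₄ j)] at this
    omega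

/-- The points at distances `EH + 4D + 1 + (2EH + 1)k` from `h` give pairwise different `a`,
hence pairwise different middle factors in the ball of radius `EH + 2D + EF`. -/
lemma wl_le_of_isThin_of_isQuasiconvexWith (hA : Subgroup.closure (A : Set G) = ⊤)
    (hthin : IsThin A D) (qcH : IsQuasiconvexWith A H EH) (qcF : IsQuasiconvexWith A F EF)
    (hsep : ConjSeparated H F)
    (hg : ∀ h ∈ H, ∀ f ∈ F, wl A g ≤ wl A (h * g * f)) (hf : f ∈ F) (hh : h ∈ H)
    (hmin : ∀ h' ∈ H, wl A (h * (g * f)) ≤ wl A (h' * (g * f))) :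
    wl A h ≤
      2 * (EH + 4 * D) + (2 * EH + 1) * {c : G | wl A c ≤ EH + 2 * D + EF}.ncard + 1 := by
  set N := {c : G | wl A c ≤ EH + 2 * D + EF}.ncard
  by_contra! hlong
  have hfactor : ∀ k < N + 1, ∃ a ∈ H, ∃ b ∈ F, ∃ c, wl A c ≤ EH + 2 * D + EF ∧
      a * c * b = h * g ∧ wl A a + (EH + 4 * D + 1 + (2 * EH + 1) * k) ≤ wl A h + EH ∧
      wl A h ≤ wl A a + (EH + 4 * D + 1 + (2 * EH + 1) * k) + EH := by
    intro k hk
    have : (2 * EH + 1) * k ≤ (2 * EH + 1) * N := Nat.mul_le_mul_left _ (by omega)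
    exact exists_short_middle_factor hA hthin qcH qcF hg hf hh hmin (by omega) (by omega)
  choose! a ha b hb c hc hprod hlow hhigh using hfactor
  have hinj : ∀ k < N + 1, ∀ k' < N + 1, c k = c k' → k = k' := by
    intro k hk k' hk' hck
    have haa' : a k = a k' := hsep.eq_of_mul_mul_eq (ha k hk) (ha k' hk') (hb k hk) (hb k' hk')
      (by rw [hprod k hk, hck, hprod k' hk'])
    have hclose : (2 * EH + 1) * Nat.dist k k' ≤ 2 * EH := by
      have := haa' ▸ hlow k hk
      have := haa' ▸ hhigh k hk
      have := hlow k' hk'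
      have := hhigh k' hk'
      rw [← Nat.dist_mul_left, Nat.dist]
      omega
    exact Nat.eq_of_dist_eq_zero (by nlinarith)
  have := Set.le_ncard_of_inj_on_range c hc hinj (finite_setOf_wl_le hA _)
  omega

end DoubleCoset

/-- **Lemma 4.7.** Let `G` be word-hyperbolic with finite generating set `A`, and let
`H, F ≤ G` be quasiconvex subgroups with `F` conjugacy separated from `H` in `G`. Then
there is an integer `K₁ = K₁(H,F,G,A) > 0` such that: whenever `g` is shortest in the
double coset `HgF`, `f ∈ F` is arbitrary, and `h ∈ H` is such that `hgf` is shortest in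
the coset `Hgf`, one has `|h|_A ≤ K₁`. -/
theorem wl_le_of_shortest_in_double_coset
    (hG : WordHyperbolic G) (A : Finset G) (hA : Subgroup.closure (A : Set G) = ⊤)
    (H F : Subgroup G) (hH : QCSubgroup H) (hF : QCSubgroup F)
    (hsep : ConjSeparated H F) :
    ∃ K₁ : ℕ, 0 < K₁ ∧
      ∀ g : G, (∀ h ∈ H, ∀ f ∈ F, wl A g ≤ wl A (h * g * f)) →
        ∀ f ∈ F, ∀ h ∈ H,
          (∀ h' ∈ H, wl A (h * (g * f)) ≤ wl A (h' * (g * f))) →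
          wl A h ≤ K₁ := by
  obtain ⟨D, hthin⟩ := hG.exists_isThin hA
  obtain ⟨EH, qcH⟩ := hH.exists_isQuasiconvexWith hA
  obtain ⟨EF, qcF⟩ := hF.exists_isQuasiconvexWith hA
  exact ⟨_, Nat.succ_pos _, fun g hg f hf h hh hmin =>
    wl_le_of_isThin_of_isQuasiconvexWith hA hthin qcH qcF hsep hg hf hh hmin⟩
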